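/- Let G be a graph with non-empty edge set. Then μ(G) ≥ min{√(d(u)·d(v)) : uv ∈ E(G)}. Moreover, if G is connected, then equality holds if and only if G is regular or G is a bipartite semi-regular graph. -/

import Mathlib

open SimpleGraph

/-- The spectral radius of a finite simple graph: the largest eigenvalue
(supremum of the real spectrum) of its adjacency matrix. -/
noncomputable def specRad {V : Type*} [Fintype V] (G : SimpleGraph V) : ℝ :=
  letI := Classical.decEq V
  letI := Classical.decRel G.Adj
  sSup (spectrum ℝ (G.adjMatrix ℝ))

/-- The signless Laplacian spectral radius of a finite simple graph:
the largest eigenvalue of `D(G) + A(G)`. -/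
noncomputable def qRad {V : Type*} [Fintype V] (G : SimpleGraph V) : ℝ :=
  letI := Classical.decEq V
  letI := Classical.decRel G.Adj
  sSup (spectrum ℝ (G.degMatrix ℝ + G.adjMatrix ℝ))

/-- The join of two graphs: their disjoint union together with all edges between them. -/
def graphJoin {α β : Type*} (G : SimpleGraph α) (H : SimpleGraph β) :
    SimpleGraph (α ⊕ β) := (Gᶜ ⊕g Hᶜ)ᶜ

/-- A graph is Hamilton-connected if every two distinct vertices are the
endpoints of a Hamiltonian path. -/
def IsHamConnected {V : Type*} [DecidableEq V] (G : SimpleGraph V) : Prop :=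
  ∀ u v : V, u ≠ v → ∃ p : G.Walk u v, p.IsHamiltonian

/-- A graph is traceable from every vertex if every vertex is an endpoint
of some Hamiltonian path. -/
def TraceableFromEveryVertex {V : Type*} [DecidableEq V] (G : SimpleGraph V) : Prop :=
  ∀ u : V, ∃ (v : V) (p : G.Walk u v), p.IsHamiltonian

/-- A graph is traceable if it contains a Hamiltonian path. -/
def IsTraceable {V : Type*} [DecidableEq V] (G : SimpleGraph V) : Prop :=
  ∃ (u v : V) (p : G.Walk u v), p.IsHamiltonian

/-!
Put `x v = √(d v)` and let `m` be the minimum of `√(d u d v)` over the edges. Then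
`xᵀ A x = ∑_{u ~ v} √(d u d v) ≥ m · xᵀ x`, while `xᵀ A x ≤ μ · xᵀ x` by Rayleigh, so `m ≤ μ`.
Equality forces `√(d u d v) = m` on every edge; in a connected graph a degree product that is
constant along edges makes the degrees alternate between two values, i.e. the graph is regular or
bipartite semiregular. Conversely, in that case `A x = m x` with `x` positive, and a positive
eigenvector of a nonnegative matrix belongs to its largest eigenvalue.
-/

namespace Matrix

variable {n : Type*} [Fintype n]

theorem mem_spectrum_iff_exists_mulVec_eq_smul [DecidableEq n] {K : Type*} [Field K]
    {A : Matrix n n K} {μ : K} :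
    μ ∈ spectrum K A ↔ ∃ v ≠ 0, A *ᵥ v = μ • v := by
  rw [← spectrum_toLin', ← Module.End.hasEigenvalue_iff_mem_spectrum]
  exact ⟨fun h => let ⟨v, hv⟩ := h.exists_hasEigenvector
      ⟨v, hv.2, Module.End.mem_eigenspace_iff.mp hv.1⟩,
    fun ⟨v, hv, hAv⟩ => Module.End.hasEigenvalue_of_hasEigenvector
      ⟨Module.End.mem_eigenspace_iff.mpr hAv, hv⟩⟩

/-- `sSup (spectrum ℝ A) • 1 - A` has nonnegative spectrum, hence is positive semidefinite. -/
theorem IsHermitian.dotProduct_mulVec_le_sSup_spectrum_mul [DecidableEq n] {A : Matrix n n ℝ}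
    (hA : A.IsHermitian) (x : n → ℝ) :
    x ⬝ᵥ A *ᵥ x ≤ sSup (spectrum ℝ A) * (x ⬝ᵥ x) := by
  set c := sSup (spectrum ℝ A)
  have hpsd : (algebraMap ℝ (Matrix n n ℝ) c - A).PosSemidef := by
    refine posSemidef_iff_isHermitian_and_spectrum_nonneg.mpr ⟨?_, ?_⟩
    · rw [algebraMap_eq_diagonal]
      exact (isHermitian_diagonal _).sub hA
    · rw [← spectrum.singleton_sub_eq]
      rintro _ ⟨_, rfl, μ, hμ, rfl⟩
      exact sub_nonneg.mpr (le_csSup finite_real_spectrum.bddAbove hμ)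
  have := hpsd.dotProduct_mulVec_nonneg x
  rw [sub_mulVec, dotProduct_sub, Algebra.algebraMap_eq_smul_one, smul_mulVec, one_mulVec,
    dotProduct_smul] at this
  simpa [sub_nonneg] using this

/-- Compare the eigenvector `y` with `x` at an index maximising `|y i| / x i`. -/
theorem abs_le_of_mulVec_le_smul {A : Matrix n n ℝ} (hA : ∀ i j, 0 ≤ A i j) {x : n → ℝ}
    (hx : ∀ i, 0 < x i) {c : ℝ} (hAx : ∀ i, (A *ᵥ x) i ≤ c * x i) {μ : ℝ} {y : n → ℝ}
    (hy : y ≠ 0) (hAy : A *ᵥ y = μ • y) : |μ| ≤ c := by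
  obtain ⟨j, hj⟩ := Function.ne_iff.mp hy
  obtain ⟨i, -, hi⟩ := Finset.exists_max_image Finset.univ (fun k => |y k| / x k)
    ⟨j, Finset.mem_univ j⟩
  set r := |y i| / x i
  have hyr : ∀ k, |y k| ≤ r * x k := fun k =>
    (div_le_iff₀ (hx k)).mp (hi k (Finset.mem_univ k))
  have hyi : 0 < |y i| :=
    (div_pos_iff_of_pos_right (hx i)).mp ((div_pos (abs_pos.mpr hj) (hx j)).trans_le
      (hi j (Finset.mem_univ j)))
  have hr : 0 ≤ r := div_nonneg (abs_nonneg _) (hx i).le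
  have hyi_eq : |y i| = r * x i := (div_mul_cancel₀ _ (hx i).ne').symm
  refine le_of_mul_le_mul_right ?_ hyi
  calc |μ| * |y i| = |∑ k, A i k * y k| := by
        rw [← abs_mul, ← smul_eq_mul, ← Pi.smul_apply, ← hAy]; rfl
    _ ≤ ∑ k, A i k * |y k| := by
        refine (Finset.abs_sum_le_sum_abs _ _).trans_eq (Finset.sum_congr rfl fun k _ => ?_)
        rw [abs_mul, abs_of_nonneg (hA i k)]
    _ ≤ ∑ k, A i k * (r * x k) :=
        Finset.sum_le_sum fun k _ => mul_le_mul_of_nonneg_left (hyr k) (hA i k)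
    _ = r * (A *ᵥ x) i := by
        rw [mulVec, dotProduct, Finset.mul_sum]
        exact Finset.sum_congr rfl fun k _ => by ring
    _ ≤ r * (c * x i) := mul_le_mul_of_nonneg_left (hAx i) hr
    _ = c * |y i| := by rw [hyi_eq]; ring

theorem sSup_spectrum_eq_of_mulVec_eq_smul [DecidableEq n] [Nonempty n] {A : Matrix n n ℝ}
    (hA : ∀ i j, 0 ≤ A i j) {x : n → ℝ} (hx : ∀ i, 0 < x i) {c : ℝ} (hAx : A *ᵥ x = c • x) :
    sSup (spectrum ℝ A) = c := by
  refine IsGreatest.csSup_eq ⟨?_, fun μ hμ => ?_⟩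
  · exact mem_spectrum_iff_exists_mulVec_eq_smul.mpr
      ⟨x, fun h => (hx (Classical.arbitrary n)).ne' (congrFun h _), hAx⟩
  · obtain ⟨y, hy, hAy⟩ := mem_spectrum_iff_exists_mulVec_eq_smul.mp hμ
    exact (le_abs_self μ).trans
      (abs_le_of_mulVec_le_smul hA hx (fun i => (congrFun hAx i).le) hy hAy)

end Matrix

theorem specRad_eq_sSup_spectrum {V : Type*} [Fintype V] [DecidableEq V] (G : SimpleGraph V)
    [DecidableRel G.Adj] : specRad G = sSup (spectrum ℝ (G.adjMatrix ℝ)) := by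
  unfold specRad
  congr!

namespace SimpleGraph

open Matrix

variable {V : Type*} [Fintype V] (G : SimpleGraph V) [DecidableRel G.Adj]

def IsSemiregularBipartite : Prop :=
  ∃ (s : Set V) (d₁ d₂ : ℕ), (∀ u v, G.Adj u v → (u ∈ s ↔ v ∉ s)) ∧
    (∀ v ∈ s, G.degree v = d₁) ∧ (∀ v ∉ s, G.degree v = d₂)

variable {G}

theorem degree_eq_of_adj_of_degree_mul_eq {k : ℕ}
    (hk : ∀ u v, G.Adj u v → G.degree u * G.degree v = k) {u v u' v' : V}
    (h : G.Adj u v) (h' : G.Adj u' v') (hu : G.degree u = G.degree u') :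
    G.degree v = G.degree v' :=
  Nat.eq_of_mul_eq_mul_left ((G.degree_pos_iff_exists_adj u).mpr ⟨v, h⟩)
    ((hk u v h).trans (hu ▸ hk u' v' h').symm)

theorem degree_eq_or_degree_eq_of_reachable {k : ℕ}
    (hk : ∀ u v, G.Adj u v → G.degree u * G.degree v = k) {u₀ v₀ w : V} (h₀ : G.Adj u₀ v₀)
    (hw : G.Reachable u₀ w) : G.degree w = G.degree u₀ ∨ G.degree w = G.degree v₀ := by
  rw [reachable_iff_reflTransGen] at hw
  induction hw with
  | refl => exact Or.inl rfl
  | tail _ hadj ih =>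
    rcases ih with hb | hb
    · exact Or.inr (degree_eq_of_adj_of_degree_mul_eq hk hadj h₀ hb)
    · exact Or.inl (degree_eq_of_adj_of_degree_mul_eq hk hadj h₀.symm hb)

theorem isRegularOfDegree_or_isSemiregularBipartite_of_degree_mul_eq (hG : G.Connected) {k : ℕ}
    (hk : ∀ u v, G.Adj u v → G.degree u * G.degree v = k) :
    (∃ d, G.IsRegularOfDegree d) ∨ G.IsSemiregularBipartite := by
  by_cases hE : ∃ u₀ v₀, G.Adj u₀ v₀
  swap
  · push Not at hE
    exact Or.inl ⟨0, fun v => Nat.eq_zero_of_not_pos fun h =>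
      let ⟨w, hw⟩ := (G.degree_pos_iff_exists_adj v).mp h; hE v w hw⟩
  obtain ⟨u₀, v₀, h₀⟩ := hE
  have hdeg : ∀ w, G.degree w = G.degree u₀ ∨ G.degree w = G.degree v₀ := fun w =>
    degree_eq_or_degree_eq_of_reachable hk h₀ (hG.preconnected u₀ w)
  by_cases hab : G.degree u₀ = G.degree v₀
  · exact Or.inl ⟨G.degree u₀, fun w => (hdeg w).elim id (·.trans hab.symm)⟩
  refine Or.inr ⟨{w | G.degree w = G.degree u₀}, _, _, fun u v h => ?_, fun _ => id,
    fun w hw => (hdeg w).resolve_left hw⟩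
  rcases hdeg u with hu | hu
  · have hv := degree_eq_of_adj_of_degree_mul_eq hk h h₀ hu
    exact ⟨fun _ hv' => hab (hv'.symm.trans hv), fun _ => hu⟩
  · have hv := degree_eq_of_adj_of_degree_mul_eq hk h h₀.symm hu
    exact ⟨fun hu' => absurd (hu'.symm.trans hu) hab, fun hv' => absurd hv hv'⟩

theorem exists_degree_mul_eq_of_isRegularOfDegree_or_isSemiregularBipartite
    (hG : (∃ d, G.IsRegularOfDegree d) ∨ G.IsSemiregularBipartite) :
    ∃ k, ∀ u v, G.Adj u v → G.degree u * G.degree v = k := by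
  rcases hG with ⟨d, hd⟩ | ⟨s, d₁, d₂, hs, hd₁, hd₂⟩
  · exact ⟨d * d, fun u v _ => by rw [hd u, hd v]⟩
  · refine ⟨d₁ * d₂, fun u v h => ?_⟩
    by_cases hu : u ∈ s
    · rw [hd₁ u hu, hd₂ v ((hs u v h).mp hu)]
    · rw [hd₂ u hu, hd₁ v (not_not.mp (mt (hs u v h).mpr hu)), mul_comm]

theorem Connected.isRegularOfDegree_or_isSemiregularBipartite_iff (hG : G.Connected) :
    ((∃ d, G.IsRegularOfDegree d) ∨ G.IsSemiregularBipartite) ↔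
      ∃ k, ∀ u v, G.Adj u v → G.degree u * G.degree v = k :=
  ⟨exists_degree_mul_eq_of_isRegularOfDegree_or_isSemiregularBipartite,
    fun ⟨_, hk⟩ => isRegularOfDegree_or_isSemiregularBipartite_of_degree_mul_eq hG hk⟩

variable (G)

noncomputable def sqrtDegree (v : V) : ℝ := √(G.degree v)

variable {G}

theorem sqrtDegree_dotProduct_adjMatrix_mulVec_sub (c : ℝ) :
    G.sqrtDegree ⬝ᵥ G.adjMatrix ℝ *ᵥ G.sqrtDegree - c * (G.sqrtDegree ⬝ᵥ G.sqrtDegree) =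
      ∑ u, ∑ v ∈ G.neighborFinset u, (√((G.degree u : ℝ) * G.degree v) - c) := by
  simp only [dotProduct, adjMatrix_mulVec_apply, Finset.mul_sum, ← Finset.sum_sub_distrib]
  refine Finset.sum_congr rfl fun u _ => ?_
  rw [Finset.sum_sub_distrib, Finset.sum_const, card_neighborFinset_eq_degree, nsmul_eq_mul,
    sqrtDegree, Real.mul_self_sqrt (Nat.cast_nonneg _)]
  simp only [sqrtDegree, Real.sqrt_mul (Nat.cast_nonneg _)]
  ring

theorem sqrtDegree_dotProduct_self_pos {u v : V} (h : G.Adj u v) :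
    0 < G.sqrtDegree ⬝ᵥ G.sqrtDegree :=
  Finset.sum_pos' (fun _ _ => mul_self_nonneg _) ⟨u, Finset.mem_univ _,
    mul_self_pos.mpr (Real.sqrt_ne_zero'.mpr (Nat.cast_pos.mpr
      ((G.degree_pos_iff_exists_adj u).mpr ⟨v, h⟩)))⟩

theorem sqrtDegree_dotProduct_adjMatrix_mulVec_le_specRad [DecidableEq V] :
    G.sqrtDegree ⬝ᵥ G.adjMatrix ℝ *ᵥ G.sqrtDegree ≤
      specRad G * (G.sqrtDegree ⬝ᵥ G.sqrtDegree) :=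
  specRad_eq_sSup_spectrum G ▸
    (G.isHermitian_adjMatrix ℝ).dotProduct_mulVec_le_sSup_spectrum_mul G.sqrtDegree

theorem mul_dotProduct_le_of_le_sqrt_degree_mul {c : ℝ}
    (hc : ∀ u v, G.Adj u v → c ≤ √((G.degree u : ℝ) * G.degree v)) :
    c * (G.sqrtDegree ⬝ᵥ G.sqrtDegree) ≤ G.sqrtDegree ⬝ᵥ G.adjMatrix ℝ *ᵥ G.sqrtDegree := by
  rw [← sub_nonneg, sqrtDegree_dotProduct_adjMatrix_mulVec_sub]
  exact Finset.sum_nonneg fun u _ => Finset.sum_nonneg fun v hv =>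
    sub_nonneg.mpr (hc u v ((mem_neighborFinset G u v).mp hv))

theorem sqrt_degree_mul_eq_of_dotProduct_le {c : ℝ}
    (hc : ∀ u v, G.Adj u v → c ≤ √((G.degree u : ℝ) * G.degree v))
    (hle : G.sqrtDegree ⬝ᵥ G.adjMatrix ℝ *ᵥ G.sqrtDegree ≤ c * (G.sqrtDegree ⬝ᵥ G.sqrtDegree))
    (u v : V) (h : G.Adj u v) : √((G.degree u : ℝ) * G.degree v) = c := by
  have hnonneg : ∀ u, ∀ v ∈ G.neighborFinset u, 0 ≤ √((G.degree u : ℝ) * G.degree v) - c :=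
    fun u v hv => sub_nonneg.mpr (hc u v ((mem_neighborFinset G u v).mp hv))
  have hzero := (Finset.sum_eq_zero_iff_of_nonneg fun u _ => Finset.sum_nonneg (hnonneg u)).mp
    (le_antisymm (by rw [← sqrtDegree_dotProduct_adjMatrix_mulVec_sub]; linarith)
      (Finset.sum_nonneg fun u _ => Finset.sum_nonneg (hnonneg u))) u (Finset.mem_univ u)
  exact sub_eq_zero.mp ((Finset.sum_eq_zero_iff_of_nonneg (hnonneg u)).mp hzero v
    ((mem_neighborFinset G u v).mpr h))

theorem adjMatrix_mulVec_sqrtDegree {k : ℕ}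
    (hk : ∀ u v, G.Adj u v → G.degree u * G.degree v = k) :
    G.adjMatrix ℝ *ᵥ G.sqrtDegree = √(k : ℝ) • G.sqrtDegree := by
  ext u
  rw [adjMatrix_mulVec_apply, Pi.smul_apply, smul_eq_mul, sqrtDegree]
  rcases Nat.eq_zero_or_pos (G.degree u) with hu | hu
  · rw [hu, Nat.cast_zero, Real.sqrt_zero, mul_zero, Finset.sum_eq_zero]
    rintro v hv
    rw [← card_neighborFinset_eq_degree, Finset.card_eq_zero] at hu
    simp [hu] at hv
  have hsqrt : 0 < √(G.degree u : ℝ) := Real.sqrt_pos.mpr (Nat.cast_pos.mpr hu)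
  have hnbr : ∀ v ∈ G.neighborFinset u, G.sqrtDegree v = √(k : ℝ) / √(G.degree u : ℝ) :=
    fun v hv => by
      rw [eq_div_iff hsqrt.ne', sqrtDegree, ← Real.sqrt_mul (Nat.cast_nonneg _), mul_comm,
        ← Nat.cast_mul, hk u v ((mem_neighborFinset G u v).mp hv)]
  rw [Finset.sum_congr rfl hnbr, Finset.sum_const, card_neighborFinset_eq_degree, nsmul_eq_mul,
    mul_div_assoc', div_eq_iff hsqrt.ne', mul_assoc, Real.mul_self_sqrt (Nat.cast_nonneg _),
    mul_comm]

end SimpleGraph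

/-- For a graph `G` with non-empty edge set,
`μ(G) ≥ min{√(d(u)d(v)) : uv ∈ E(G)}`; moreover, if `G` is connected then
equality holds if and only if `G` is regular or bipartite semi-regular. -/
theorem stmt_16 {V : Type*} [Fintype V] [DecidableEq V]
    (G : SimpleGraph V) [DecidableRel G.Adj] (hne : G.edgeSet.Nonempty) :
    sInf {x : ℝ | ∃ u v, G.Adj u v ∧
        x = Real.sqrt ((G.degree u : ℝ) * (G.degree v : ℝ))} ≤ specRad G ∧
    (G.Connected →
      (specRad G = sInf {x : ℝ | ∃ u v, G.Adj u v ∧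
          x = Real.sqrt ((G.degree u : ℝ) * (G.degree v : ℝ))} ↔
        (∃ d, G.IsRegularOfDegree d) ∨
        ∃ (s : Set V) (d₁ d₂ : ℕ),
          (∀ u v, G.Adj u v → (u ∈ s ↔ v ∉ s)) ∧
          (∀ v ∈ s, G.degree v = d₁) ∧ (∀ v ∉ s, G.degree v = d₂))) := by
  obtain ⟨u₀, v₀, h₀⟩ := ne_bot_iff_exists_adj.mp (edgeSet_nonempty.mp hne)
  set m := sInf {x : ℝ | ∃ u v, G.Adj u v ∧
    x = Real.sqrt ((G.degree u : ℝ) * (G.degree v : ℝ))}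
  have hm : ∀ u v, G.Adj u v → m ≤ √((G.degree u : ℝ) * G.degree v) := fun u v h =>
    csInf_le ⟨0, by rintro _ ⟨_, _, -, rfl⟩; positivity⟩ ⟨u, v, h, rfl⟩
  have hray := G.sqrtDegree_dotProduct_adjMatrix_mulVec_le_specRad
  refine ⟨le_of_mul_le_mul_right ((mul_dotProduct_le_of_le_sqrt_degree_mul hm).trans hray)
    (sqrtDegree_dotProduct_self_pos h₀), fun hG => ?_⟩
  refine Iff.trans ?_ hG.isRegularOfDegree_or_isSemiregularBipartite_iff.symm
  constructor
  · intro heq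
    have hedge := sqrt_degree_mul_eq_of_dotProduct_le hm (heq ▸ hray)
    refine ⟨G.degree u₀ * G.degree v₀, fun u v h => ?_⟩
    exact_mod_cast (Real.sqrt_inj (by positivity) (by positivity)).mp
      ((hedge u v h).trans (hedge u₀ v₀ h₀).symm)
  · rintro ⟨k, hk⟩
    have hk' : ∀ u v, G.Adj u v → √((G.degree u : ℝ) * G.degree v) = √(k : ℝ) := fun u v h => by
      rw [← Nat.cast_mul, hk u v h]
    have hmk : m = √(k : ℝ) := le_antisymm ((hm u₀ v₀ h₀).trans_eq (hk' u₀ v₀ h₀))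
      (le_csInf ⟨_, u₀, v₀, h₀, rfl⟩ (by rintro _ ⟨u, v, h, rfl⟩; exact (hk' u v h).ge))
    have _ := h₀.nontrivial
    rw [specRad_eq_sSup_spectrum, hmk]
    exact Matrix.sSup_spectrum_eq_of_mulVec_eq_smul
      (fun i j => by by_cases h : G.Adj i j <;> simp [h])
      (fun v => Real.sqrt_pos.mpr (Nat.cast_pos.mpr (hG.preconnected.degree_pos_of_nontrivial v)))
      (adjMatrix_mulVec_sqrtDegree hk)
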